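/- Let G = (V,E) be a finite simple graph without isolated vertices. Then |V| equals the minimum cardinality of a (1/2)-dominating set of G plus the maximum cardinality of a (1/2)-independent set of G. -/

import Mathlib

/-!
Complementation exchanges `(1/2)`-dominating and `(1/2)`-independent sets: a vertex outside `X`
has at least half of its neighbours in `X` exactly when, as a vertex of `Xᶜ`, at most half of
them lie in `Xᶜ`. The complement of a minimum dominating set therefore gives `|V| - a ≤ b`, and
the complement of a maximum independent set gives `a ≤ |V| - b`.
-/

open Finset

lemma card_inter_compl_le_half_iff {α : Type*} [Fintype α] [DecidableEq α] (s t : Finset α) :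
    (#(s ∩ tᶜ) : ℚ) ≤ 1 / 2 * #s ↔ 1 / 2 * #s ≤ (#(s ∩ t) : ℚ) := by
  have hsplit : (#(s ∩ t) : ℚ) + #(s ∩ tᶜ) = #s := by
    rw [← sdiff_eq_inter_compl]
    exact_mod_cast card_inter_add_card_sdiff s t
  constructor <;> intro h <;> linarith

lemma card_eq_add_of_isLeast_of_isGreatest {α : Type*} [Fintype α] [DecidableEq α]
    {P Q : Finset α → Prop} (hPQ : ∀ X, P X ↔ Q Xᶜ) {a b : ℕ}
    (ha : IsLeast {n | ∃ X, P X ∧ #X = n} a) (hb : IsGreatest {n | ∃ X, Q X ∧ #X = n} b) :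
    Fintype.card α = a + b := by
  obtain ⟨⟨X, hPX, rfl⟩, ha_min⟩ := ha
  obtain ⟨⟨Y, hQY, rfl⟩, hb_max⟩ := hb
  have hXc : Fintype.card α - #X ≤ #Y :=
    hb_max ⟨Xᶜ, (hPQ X).1 hPX, card_compl X⟩
  have hYc : #X ≤ Fintype.card α - #Y :=
    ha_min ⟨Yᶜ, (hPQ Yᶜ).2 (by rwa [compl_compl]), card_compl Y⟩
  have := card_le_univ X
  have := card_le_univ Y
  omega

namespace SimpleGraph

variable {V : Type*} [Fintype V] [DecidableEq V] (G : SimpleGraph V) [DecidableRel G.Adj]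

def IsHalfDominating (X : Finset V) : Prop :=
  ∀ v ∉ X, (1 / 2 : ℚ) * #(G.neighborFinset v) ≤ #(G.neighborFinset v ∩ X)

def IsHalfIndependent (X : Finset V) : Prop :=
  ∀ v ∈ X, (#(G.neighborFinset v ∩ X) : ℚ) ≤ 1 / 2 * #(G.neighborFinset v)

lemma isHalfDominating_iff_isHalfIndependent_compl (X : Finset V) :
    G.IsHalfDominating X ↔ G.IsHalfIndependent Xᶜ := by
  simp only [IsHalfDominating, IsHalfIndependent, mem_compl, card_inter_compl_le_half_iff]

end SimpleGraph

theorem stmt_12_general {V : Type*} [Fintype V] [DecidableEq V]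
    (G : SimpleGraph V) [DecidableRel G.Adj] (a b : ℕ)
    (ha : IsLeast {n : ℕ | ∃ X : Finset V,
      (∀ v ∉ X, (1 / 2 : ℚ) * ((G.neighborFinset v).card : ℚ) ≤
        ((G.neighborFinset v ∩ X).card : ℚ)) ∧ X.card = n} a)
    (hb : IsGreatest {n : ℕ | ∃ X : Finset V,
      (∀ v ∈ X, ((G.neighborFinset v ∩ X).card : ℚ) ≤
        (1 / 2 : ℚ) * ((G.neighborFinset v).card : ℚ)) ∧ X.card = n} b) :
    Fintype.card V = a + b :=
  card_eq_add_of_isLeast_of_isGreatest (P := G.IsHalfDominating) (Q := G.IsHalfIndependent)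
    G.isHalfDominating_iff_isHalfIndependent_compl ha hb

/-- (Gallai-type identity.) For a finite simple graph `G` without isolated
vertices, the number of vertices equals the minimum cardinality `a` of a `(1/2)`-dominating
set plus the maximum cardinality `b` of a `(1/2)`-independent set. -/
theorem stmt_12 {V : Type*} [Fintype V] [DecidableEq V]
    (G : SimpleGraph V) [DecidableRel G.Adj] (hiso : ∀ v : V, 0 < G.degree v) (a b : ℕ)
    (ha : IsLeast {n : ℕ | ∃ X : Finset V,
      (∀ v ∉ X, (1 / 2 : ℚ) * ((G.neighborFinset v).card : ℚ) ≤
        ((G.neighborFinset v ∩ X).card : ℚ)) ∧ X.card = n} a)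
    (hb : IsGreatest {n : ℕ | ∃ X : Finset V,
      (∀ v ∈ X, ((G.neighborFinset v ∩ X).card : ℚ) ≤
        (1 / 2 : ℚ) * ((G.neighborFinset v).card : ℚ)) ∧ X.card = n} b) :
    Fintype.card V = a + b :=
  stmt_12_general G a b ha hb
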